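/- Suppose the ranking function s satisfies monotonicity. Let v be a tuple and let D consist of v together with, for every attribute j ∈ I and every value θ ∈ V j with θ ≠ v j, the tuple v_{j,θ} that agrees with v on every attribute except j and has v_{j,θ} j = θ. Then for every point query q other than the point query of v (i.e., with q j ≠ {v j} for at least one attribute j), there exists t ∈ D with t ≠ v and s q t < s q v; in particular, q does not return v. (This is the worst-case database construction in the proof of Theorem 1: in this database the only point query that can return v is the one exactly matching v on all attributes.) -/

import Mathlib

open Finset

variable {I α : Type*}

/-- A query assigns to each attribute a nonempty subset of its domain. -/
def ValidQuery (V : I → Finset α) (q : I → Finset α) : Prop :=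
  ∀ i, (q i).Nonempty ∧ q i ⊆ V i

/-- A tuple takes a value in the domain of each attribute. -/
def ValidTuple (V : I → Finset α) (t : I → α) : Prop :=
  ∀ i, t i ∈ V i

/-- `q` returns `v` as the top-1 result over the database `D`. -/
def Returns (s : (I → Finset α) → (I → α) → ℝ) (D : Finset (I → α))
    (q : I → Finset α) (v : I → α) : Prop :=
  ∀ t ∈ D, t ≠ v → s q v < s q t

/-- Additivity of the ranking function `s`. -/
def RankAdditive [DecidableEq I] (V : I → Finset α)
    (s : (I → Finset α) → (I → α) → ℝ) : Prop :=
  ∀ (q : I → Finset α) (t t' : I → α) (j : I),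
    ValidQuery V q → ValidTuple V t → ValidTuple V t' →
    s q t < s q t' →
    s (Function.update q j {t j}) t < s (Function.update q j {t j}) t'

/-- Monotonicity of the ranking function `s`. -/
def RankMonotonic (V : I → Finset α)
    (s : (I → Finset α) → (I → α) → ℝ) : Prop :=
  ∀ (q : I → Finset α) (i : I) (t t' : I → α),
    ValidQuery V q → ValidTuple V t → ValidTuple V t' →
    (∀ j, j ≠ i → t j = t' j) → t i ∈ q i → t' i ∉ q i →
    s q t < s q t'

/-- The linear ranking function with weights `w`. -/
noncomputable def linS [Fintype I] [DecidableEq α] (w : I → ℝ)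
    (q : I → Finset α) (t : I → α) : ℝ :=
  ∑ i, w i * (if t i ∈ q i then (0 : ℝ) else 1)

theorem ValidTuple.update [DecidableEq I] {V : I → Finset α} {v : I → α} (hv : ValidTuple V v)
    {j : I} {a : α} (ha : a ∈ V j) : ValidTuple V (Function.update v j a) := by
  intro i
  rcases eq_or_ne i j with rfl | hij
  · simpa using ha
  · simpa [Function.update_of_ne hij] using hv i

theorem RankMonotonic.update_lt [DecidableEq I] {V : I → Finset α}
    {s : (I → Finset α) → (I → α) → ℝ} (hs : RankMonotonic V s) {q : I → Finset α}
    (hq : ValidQuery V q) {v : I → α} (hv : ValidTuple V v) {j : I} {a : α}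
    (ha : a ∈ q j) (hvj : v j ∉ q j) : s q (Function.update v j a) < s q v :=
  hs q j _ v hq (hv.update ((hq j).2 ha)) hv
    (fun _ hij => Function.update_of_ne hij a v) (by simpa using ha) hvj

theorem not_returns_of_lt {s : (I → Finset α) → (I → α) → ℝ} {D : Finset (I → α)}
    {q : I → Finset α} {v t : I → α} (htD : t ∈ D) (htv : t ≠ v) (hlt : s q t < s q v) :
    ¬ Returns s D q v :=
  fun hret => (hret t htD htv).not_gt hlt

theorem worst_case_database_general {I α : Type*} [DecidableEq I]
    (V : I → Finset α)
    (s : (I → Finset α) → (I → α) → ℝ) (hs : RankMonotonic V s)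
    (v : I → α) (hvval : ValidTuple V v)
    (D : Finset (I → α))
    (hD : ∀ t : I → α, t ∈ D ↔
      (t = v ∨ ∃ j θ, θ ∈ V j ∧ θ ≠ v j ∧ t = Function.update v j θ))
    (q : I → Finset α) (hq : ValidQuery V q)
    (hpt : ∀ i, ∃ a, q i = {a})
    (hne : ∃ j, q j ≠ ({v j} : Finset α)) :
    (∃ t ∈ D, t ≠ v ∧ s q t < s q v) ∧ ¬ Returns s D q v := by
  obtain ⟨j, hj⟩ := hne
  obtain ⟨a, ha⟩ := hpt j
  have hav : a ≠ v j := fun h => hj (by rw [ha, h])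
  have haq : a ∈ q j := ha ▸ mem_singleton_self a
  have hvq : v j ∉ q j := by simpa [ha] using hav.symm
  have htD : Function.update v j a ∈ D := (hD _).2 (.inr ⟨j, a, (hq j).2 haq, hav, rfl⟩)
  have htv : Function.update v j a ≠ v := fun h => hav (by simpa using congrFun h j)
  have hlt := hs.update_lt hq hvval haq hvq
  exact ⟨⟨_, htD, htv, hlt⟩, not_returns_of_lt htD htv hlt⟩

/-- the worst-case database of Theorem 1. With `D` consisting of
`v` together with all single-attribute perturbations of `v`, every point query
other than the point query of `v` is strictly beaten by some other tuple, hence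
does not return `v`. -/
theorem worst_case_database {I α : Type*} [Fintype I] [Nonempty I] [DecidableEq I]
    [DecidableEq α]
    (V : I → Finset α) (hVne : ∀ i, (V i).Nonempty)
    (s : (I → Finset α) → (I → α) → ℝ) (hs : RankMonotonic V s)
    (v : I → α) (hvval : ValidTuple V v)
    (D : Finset (I → α))
    (hD : ∀ t : I → α, t ∈ D ↔
      (t = v ∨ ∃ j θ, θ ∈ V j ∧ θ ≠ v j ∧ t = Function.update v j θ))
    (q : I → Finset α) (hq : ValidQuery V q)
    (hpt : ∀ i, ∃ a, q i = {a})
    (hne : ∃ j, q j ≠ ({v j} : Finset α)) :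
    (∃ t ∈ D, t ≠ v ∧ s q t < s q v) ∧ ¬ Returns s D q v :=
  worst_case_database_general V s hs v hvval D hD q hq hpt hne
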